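/- The affine change (x, y, t) ↦ (1 − x, y, −t) conjugates system (A) with parameters (c, e, f) to system (A) with parameters (c, −e, −f): writing p_{c,e,f}(x,y) = c·x + y − c·x² and q_{c,e,f}(x,y) = e·x + (−1 + (e+f)/c)·y − e·x² + 2·x·y, one has, for all real x, y and all c ≠ 0, e, f: p_{c,e,f}(1 − x, y) = p_{c,−e,−f}(x, y) and q_{c,e,f}(1 − x, y) = −q_{c,−e,−f}(x, y). Consequently one may restrict attention to f ≥ 0 in the study of the family. -/
import Mathlib


/-- Right-hand side p of system (A). -/
def pA (c e f x y : ℝ) : ℝ := c * x + y - c * x ^ 2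

/-- Right-hand side q of system (A). -/
noncomputable def qA (c e f x y : ℝ) : ℝ :=
  e * x + (-1 + (e + f) / c) * y - e * x ^ 2 + 2 * x * y

/-- The affine change `(x, y, t) ↦ (1 - x, y, -t)` conjugates system (A) with
parameters `(c, e, f)` to system (A) with parameters `(c, -e, -f)`:
`p_{c,e,f}(1 - x, y) = p_{c,-e,-f}(x, y)` and
`q_{c,e,f}(1 - x, y) = -q_{c,-e,-f}(x, y)` for all real `x, y` and all `c ≠ 0`,
`e`, `f`. (Consequently one may restrict attention to `f ≥ 0`.) -/
theorem symmetry_sysA (c e f : ℝ) (hc : c ≠ 0) (x y : ℝ) :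
    pA c e f (1 - x) y = pA c (-e) (-f) x y ∧
    qA c e f (1 - x) y = -qA c (-e) (-f) x y := by
  unfold pA qA; field_simp; constructor <;> ring
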